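/- For real numbers a, b, c with a > 0 and a² > b² + c², and for 0 < t < π, the definite integral ∫_{−t}^{t} dx/(a + b cos x + c sin x) equals (2/√(a²−b²−c²)) · [arctan(((a−b)·tan(t/2) + c)/√(a²−b²−c²)) + arctan(((a−b)·tan(t/2) − c)/√(a²−b²−c²))]. -/

import Mathlib

open Real

theorem stmt_1 (a b c t : ℝ) (ha : 0 < a) (h : a ^ 2 > b ^ 2 + c ^ 2)
    (ht0 : 0 < t) (htπ : t < π) :
    ∫ x in (-t)..t, 1 / (a + b * Real.cos x + c * Real.sin x) =
      (2 / Real.sqrt (a ^ 2 - b ^ 2 - c ^ 2)) *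
        (Real.arctan (((a - b) * Real.tan (t / 2) + c) / Real.sqrt (a ^ 2 - b ^ 2 - c ^ 2)) +
         Real.arctan (((a - b) * Real.tan (t / 2) - c) / Real.sqrt (a ^ 2 - b ^ 2 - c ^ 2))) := by
  set s := Real.sqrt (a ^ 2 - b ^ 2 - c ^ 2) with hs_def
  have hs2 : s ^ 2 = a ^ 2 - b ^ 2 - c ^ 2 := Real.sq_sqrt (by linarith)
  have hs : 0 < s := Real.sqrt_pos.mpr (by linarith)
  have hpos : ∀ x : ℝ, 0 < a + b * Real.cos x + c * Real.sin x := by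
    intro x
    nlinarith [sq_nonneg (b * Real.sin x - c * Real.cos x), Real.sin_sq_add_cos_sq x,
      sq_nonneg (a + b * Real.cos x + c * Real.sin x), sq_nonneg (b * Real.cos x + c * Real.sin x)]
  set F : ℝ → ℝ := fun x => (2 / s) * Real.arctan (((a - b) * Real.tan (x / 2) + c) / s) with hF
  have key : ∫ x in (-t)..t, 1 / (a + b * Real.cos x + c * Real.sin x) = F t - F (-t) := by
    apply intervalIntegral.integral_eq_sub_of_hasDerivAt
    · intro x hx
      rw [Set.uIcc_of_le (by linarith : -t ≤ t)] at hx
      have hx1 : -π < x := by linarith [hx.1]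
      have hx2 : x < π := by linarith [hx.2]
      have hcc : 0 < Real.cos (x / 2) :=
        Real.cos_pos_of_mem_Ioo ⟨by linarith, by linarith⟩
      have hcc' : Real.cos (x / 2) ≠ 0 := ne_of_gt hcc
      have htan : HasDerivAt (fun y : ℝ => Real.tan (y / 2))
          (1 / Real.cos (x / 2) ^ 2 * (1 / 2)) x := by
        have := (Real.hasDerivAt_tan hcc').comp x
          ((hasDerivAt_id x).div_const 2)
        exact this
      have hinner : HasDerivAt (fun y : ℝ => ((a - b) * Real.tan (y / 2) + c) / s)
          ((a - b) * (1 / Real.cos (x / 2) ^ 2 * (1 / 2)) / s) x := by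
        exact ((htan.const_mul (a - b)).add_const c).div_const s
      have harct := (Real.hasDerivAt_arctan (((a - b) * Real.tan (x / 2) + c) / s)).comp x hinner
      have hD : HasDerivAt F
          ((2 / s) * ((1 / (1 + (((a - b) * Real.tan (x / 2) + c) / s) ^ 2)) *
            ((a - b) * (1 / Real.cos (x / 2) ^ 2 * (1 / 2)) / s))) x := by
        simpa [hF, Function.comp, mul_assoc] using harct.const_mul (2 / s)
      convert hD using 1
      · rfl
      · rfl
      -- algebra: show 1/(a + b cos x + c sin x) equals the derivative expression
      have hcos : Real.cos x = 2 * Real.cos (x / 2) ^ 2 - 1 := by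
        conv_lhs => rw [show x = 2 * (x / 2) by ring, Real.cos_two_mul]
      have hsin : Real.sin x = 2 * Real.sin (x / 2) * Real.cos (x / 2) := by
        conv_lhs => rw [show x = 2 * (x / 2) by ring, Real.sin_two_mul]
      have htaneq : Real.tan (x / 2) = Real.sin (x / 2) / Real.cos (x / 2) := Real.tan_eq_sin_div_cos _
      have hden : a + b * (2 * Real.cos (x / 2) ^ 2 - 1) + c * (2 * Real.sin (x / 2) * Real.cos (x / 2)) ≠ 0 := by
        rw [← hcos, ← hsin]; exact ne_of_gt (hpos x)
      have h1 : (0:ℝ) < 1 + (((a - b) * Real.tan (x / 2) + c) / s) ^ 2 := by positivity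
      have hpyth : Real.sin (x / 2) ^ 2 = 1 - Real.cos (x / 2) ^ 2 := by
        nlinarith [Real.sin_sq_add_cos_sq (x / 2)]
      rw [hcos, hsin, htaneq]
      field_simp
      rw [div_eq_iff (by convert hden using 2; ring)]
      linear_combination (Real.cos (x / 2) ^ 2) * hs2 + ((a - b) ^ 2) * hpyth
    · apply Continuous.intervalIntegrable
      exact continuous_const.div
        (by continuity) (fun x => ne_of_gt (hpos x))
  rw [key]
  have hneg : F (-t) = -((2 / s) * Real.arctan (((a - b) * Real.tan (t / 2) - c) / s)) := by
    have : (-t) / 2 = -(t / 2) := by ring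
    rw [hF]
    simp only [this, Real.tan_neg]
    rw [show ((a - b) * -Real.tan (t / 2) + c) / s = -(((a - b) * Real.tan (t / 2) - c) / s) by ring,
      Real.arctan_neg]
    ring
  rw [hneg, hF]
  ring
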